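/- Fix q > 0 and let Σ_n be a random permutation of [n] from the Mallows(q) distribution. Then Σ_n is weakly dissociated: for any two disjoint blocks of consecutive indices A = {i, i+1, …, i+m−1} and B = {i′, i′+1, …, i′+m′−1} with i+m−1 < i′ and i′+m′−1 ≤ n, and for all σ ∈ S_m and σ′ ∈ S_{m′}, P( red(Σ_{n|A}) = σ and red(Σ_{n|B}) = σ′ ) = P( red(Σ_{n|A}) = σ ) · P( red(Σ_{n|B}) = σ′ ). -/

import Mathlib

open scoped Classical
open Filter

noncomputable section

/-- `τ` occurs in `σ` at the strictly increasing positions given by `f`: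
`f` is strictly increasing and `σ ∘ f` is order-isomorphic to `τ`. -/
def OccursAt {m n : ℕ} (τ : Equiv.Perm (Fin m)) (σ : Equiv.Perm (Fin n))
    (f : Fin m → Fin n) : Prop :=
  StrictMono f ∧ ∀ k l, σ (f k) < σ (f l) ↔ τ k < τ l

/-- `τ` occurs in `σ` at the set of positions `α` (listed in increasing order). -/
def OccursOn {m n : ℕ} (τ : Equiv.Perm (Fin m)) (σ : Equiv.Perm (Fin n))
    (α : Finset (Fin n)) : Prop :=
  ∃ f : Fin m → Fin n, StrictMono f ∧ Finset.univ.image f = α ∧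
    ∀ k l, σ (f k) < σ (f l) ↔ τ k < τ l

/-- `τ` occurs in `σ` at the consecutive (0-indexed) positions `i, i+1, …, i+m-1`. -/
def OccursConsec {m n : ℕ} (τ : Equiv.Perm (Fin m)) (σ : Equiv.Perm (Fin n)) (i : ℕ) : Prop :=
  ∃ h : i + m ≤ n, ∀ k l : Fin m,
    σ ⟨i + k, by have := k.isLt; omega⟩ < σ ⟨i + l, by have := l.isLt; omega⟩ ↔ τ k < τ l

/-- The overlap count `L_s(τ)`: the number of permutations of `[2m-s]` containing
two occurrences of `τ` at index sets sharing exactly `s` elements. -/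
def overlapCount {m : ℕ} (τ : Equiv.Perm (Fin m)) (s : ℕ) : ℕ :=
  Set.ncard {ρ : Equiv.Perm (Fin (2 * m - s)) |
    ∃ α β : Finset (Fin (2 * m - s)), α.card = m ∧ β.card = m ∧ (α ∩ β).card = s ∧
      OccursOn τ ρ α ∧ OccursOn τ ρ β}

/-- The sequential overlap count `L̄_s(τ)`: the number of permutations of `[2m-s]` with
occurrences of `τ` at positions `(1,…,m)` and `(m-s+1,…,2m-s)`. -/
def seqOverlapCount {m : ℕ} (τ : Equiv.Perm (Fin m)) (s : ℕ) : ℕ :=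
  Set.ncard {ρ : Equiv.Perm (Fin (2 * m - s)) |
    OccursConsec τ ρ 0 ∧ OccursConsec τ ρ (m - s)}

/-- The number of inversions of a permutation. -/
def invCount {n : ℕ} (σ : Equiv.Perm (Fin n)) : ℕ :=
  (Finset.univ.filter fun p : Fin n × Fin n => p.1 < p.2 ∧ σ p.2 < σ p.1).card

/-- The inversion polynomial `I_n(q) = ∏_{j=1}^n (1 + q + ⋯ + q^{j-1})`. -/
def invPoly (n : ℕ) (q : ℝ) : ℝ :=
  ∏ j ∈ Finset.range n, ∑ i ∈ Finset.range (j + 1), q ^ i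

/-- Probability of the event `E` under the uniform distribution on `S_n`. -/
def unifProb {n : ℕ} (E : Set (Equiv.Perm (Fin n))) : ℝ :=
  (E.ncard : ℝ) / (n.factorial : ℝ)

/-- Probability of the event `E` under the Mallows(q) distribution on `S_n`. -/
def mallowsProb {n : ℕ} (q : ℝ) (E : Set (Equiv.Perm (Fin n))) : ℝ :=
  (∑ σ ∈ Finset.univ.filter (· ∈ E), q ^ invCount σ) / invPoly n q

/-- Expectation of `X` under the uniform distribution on `S_n`. -/
def unifExp {n : ℕ} (X : Equiv.Perm (Fin n) → ℝ) : ℝ :=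
  (∑ σ : Equiv.Perm (Fin n), X σ) / (n.factorial : ℝ)

/-- Expectation of `X` under the Mallows(q) distribution on `S_n`. -/
def mallowsExp {n : ℕ} (q : ℝ) (X : Equiv.Perm (Fin n) → ℝ) : ℝ :=
  (∑ σ : Equiv.Perm (Fin n), X σ * q ^ invCount σ) / invPoly n q

/-- The Poisson(lam) probability mass function. -/
def poissonPMF (lam : ℝ) (k : ℕ) : ℝ :=
  Real.exp (-lam) * lam ^ k / (k.factorial : ℝ)

/-- Total variation distance between the law of the ℕ-valued statistic `W` of a uniformly
random permutation of `[n]` and the Poisson(lam) distribution. -/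
def dTVNatUnif {n : ℕ} (W : Equiv.Perm (Fin n) → ℕ) (lam : ℝ) : ℝ :=
  (1 / 2) * ∑' k : ℕ, |unifProb {σ | W σ = k} - poissonPMF lam k|

/-- Total variation distance between the law of the ℕ-valued statistic `W` of a Mallows(q)
random permutation of `[n]` and the Poisson(lam) distribution. -/
def dTVNatMallows {n : ℕ} (q : ℝ) (W : Equiv.Perm (Fin n) → ℕ) (lam : ℝ) : ℝ :=
  (1 / 2) * ∑' k : ℕ, |mallowsProb q {σ | W σ = k} - poissonPMF lam k|

/-- Total variation distance between the joint law of the indicator family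
`(X_α)_{α ∈ I}` of a uniformly random permutation of `[n]` and the joint law of
independent Bernoulli random variables with marginals `p`. -/
def dTVFamUnif {n : ℕ} {I : Type*} [Fintype I] [DecidableEq I]
    (X : Equiv.Perm (Fin n) → I → Prop) (p : I → ℝ) : ℝ :=
  (1 / 2) * ∑ x : I → Bool,
    |unifProb {σ | ∀ α, X σ α ↔ x α = true} - ∏ α, (if x α then p α else 1 - p α)|

/-- Total variation distance between the joint law of the indicator family
`(X_α)_{α ∈ I}` of a Mallows(q) random permutation of `[n]` and the joint law of
independent Bernoulli random variables with marginals `p`. -/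
def dTVFamMallows {n : ℕ} (q : ℝ) {I : Type*} [Fintype I] [DecidableEq I]
    (X : Equiv.Perm (Fin n) → I → Prop) (p : I → ℝ) : ℝ :=
  (1 / 2) * ∑ x : I → Bool,
    |mallowsProb q {σ | ∀ α, X σ α ↔ x α = true} - ∏ α, (if x α then p α else 1 - p α)|

/-!
Right multiplication by a permutation `τ` acting inside a block `A` of consecutive positions
turns the pattern `σ` of `π` on `A` into `στ` and changes `inv π` by `inv (στ) - inv σ`: the
inversions inside `A` are those of the pattern, and the pairs not inside `A` are only
permuted, in an order-preserving way. Hence the Mallows weight of `{red(Σ|A) = σ}` is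
`q ^ inv σ` times a constant, i.e. `red(Σ|A)` is Mallows(q) on `S_m`. A second, disjoint block
`B` is untouched by these moves, so the same argument applied to `A` and then to `B` shows that
`(red(Σ|A), red(Σ|B))` is Mallows(q) ⊗ Mallows(q). The normalisation
`∑ π, q ^ inv π = I_n(q)` comes from writing a permutation of `[n+1]` by its last value `v`
and the pattern of the first `n` values; the last position adds `n - v` inversions.
-/

theorem Tuple.lt_iff_sort_inv_lt {α : Type*} [LinearOrder α] {m : ℕ} {f : Fin m → α}
    (hf : Function.Injective f) (k l : Fin m) :
    f k < f l ↔ (Tuple.sort f)⁻¹ k < (Tuple.sort f)⁻¹ l := by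
  have hs : StrictMono (f ∘ Tuple.sort f) :=
    (Tuple.monotone_sort f).strictMono_of_injective (hf.comp (Tuple.sort f).injective)
  simpa only [Function.comp_apply, Equiv.Perm.coe_inv, Equiv.apply_symm_apply] using
    hs.lt_iff_lt (a := (Tuple.sort f)⁻¹ k) (b := (Tuple.sort f)⁻¹ l)

theorem Equiv.Perm.eq_of_forall_lt_iff {m : ℕ} {σ τ : Equiv.Perm (Fin m)}
    (H : ∀ k l, σ k < σ l ↔ τ k < τ l) : σ = τ := by
  have hmono : StrictMono (σ * τ⁻¹) := fun a b hab => by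
    simpa only [Equiv.Perm.mul_apply, Equiv.Perm.coe_inv, H, Equiv.apply_symm_apply] using hab
  rw [← mul_inv_eq_one, ← Equiv.Perm.monotone_iff]
  exact hmono.monotone

section Inversions

variable {n : ℕ}

def inversions (π : Equiv.Perm (Fin n)) : Finset (Fin n × Fin n) :=
  Finset.univ.filter fun p => p.1 < p.2 ∧ π p.2 < π p.1

lemma invCount_eq_card_inversions (π : Equiv.Perm (Fin n)) :
    invCount π = (inversions π).card := rfl

@[simp] lemma mem_inversions {π : Equiv.Perm (Fin n)} {p : Fin n × Fin n} :
    p ∈ inversions π ↔ p.1 < p.2 ∧ π p.2 < π p.1 := by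
  simp [inversions]

lemma invCount_one : invCount (1 : Equiv.Perm (Fin n)) = 0 :=
  Finset.card_eq_zero.mpr (Finset.filter_eq_empty_iff.mpr fun _ _ hp => lt_asymm hp.1 hp.2)

lemma invCount_eq_sum (π : Equiv.Perm (Fin n)) :
    invCount π = ∑ a, ∑ b, if a < b ∧ π b < π a then 1 else 0 := by
  rw [invCount, Finset.card_filter, Fintype.sum_prod_type]

end Inversions

lemma Fin.card_filter_le_castSucc {n : ℕ} (v : Fin (n + 1)) :
    (Finset.univ.filter fun y : Fin n => v ≤ y.castSucc).card = n - v := by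
  have hsplit := Finset.card_filter_add_card_filter_not (s := Finset.univ)
    (fun y : Fin n => (y : ℕ) < v)
  rw [Fin.card_filter_val_lt, Finset.card_univ, Fintype.card_fin] at hsplit
  simp only [not_lt] at hsplit
  simp only [Fin.le_def, Fin.val_castSucc]
  have hv := Nat.lt_succ_iff.mp v.isLt
  omega

def insertLast {n : ℕ} (v : Fin (n + 1)) (e : Equiv.Perm (Fin n)) : Equiv.Perm (Fin (n + 1)) :=
  Equiv.ofBijective (Fin.snoc (α := fun _ => Fin (n + 1)) (v.succAbove ∘ e) v) <|
    Finite.injective_iff_bijective.mp <|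
      Fin.snoc_injective_of_injective (Fin.succAbove_right_injective.comp e.injective)
        fun ⟨x, hx⟩ => Fin.succAbove_ne v (e x) hx

section InsertLast

variable {n : ℕ} (v : Fin (n + 1)) (e : Equiv.Perm (Fin n))

@[simp] lemma insertLast_last : insertLast v e (Fin.last n) = v := by
  simp [insertLast]

@[simp] lemma insertLast_castSucc (x : Fin n) :
    insertLast v e x.castSucc = v.succAbove (e x) := by
  simp [insertLast]

lemma insertLast_injective :
    Function.Injective fun p : Fin (n + 1) × Equiv.Perm (Fin n) => insertLast p.1 p.2 := by
  rintro ⟨v, e⟩ ⟨v', e'⟩ hve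
  have hv : v = v' := by simpa using congrArg (· (Fin.last n)) hve
  subst hv
  refine Prod.ext rfl (Equiv.ext fun x => Fin.succAbove_right_injective (p := v) ?_)
  simpa using congrArg (· x.castSucc) hve

lemma invCount_insertLast : invCount (insertLast v e) = invCount e + (n - v) := by
  have hlast : ∑ x : Fin n, (if v < v.succAbove (e x) then 1 else 0) = n - v := by
    simp only [Fin.lt_succAbove_iff_le_castSucc]
    rw [Equiv.sum_comp e (fun y : Fin n => if v ≤ y.castSucc then 1 else 0),
      ← Finset.card_filter, Fin.card_filter_le_castSucc]
  rw [invCount_eq_sum, invCount_eq_sum]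
  simp only [Fin.sum_univ_castSucc, insertLast_castSucc, insertLast_last,
    Fin.castSucc_lt_castSucc_iff, Fin.succAbove_lt_succAbove_iff, Fin.castSucc_lt_last,
    true_and, lt_irrefl, not_lt.mpr (Fin.le_last _), false_and, if_false,
    Finset.sum_const_zero, add_zero, Finset.sum_add_distrib, hlast]

end InsertLast

lemma sum_pow_invCount (q : ℝ) (n : ℕ) :
    ∑ π : Equiv.Perm (Fin n), q ^ invCount π = invPoly n q := by
  induction n with
  | zero => simp [invPoly, invCount_eq_sum]
  | succ n ih =>
    have hbij :
        Function.Bijective fun p : Fin (n + 1) × Equiv.Perm (Fin n) => insertLast p.1 p.2 :=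
      (Fintype.bijective_iff_injective_and_card _).mpr ⟨insertLast_injective, by
        simp [Fintype.card_perm, Nat.factorial_succ]⟩
    have hrange : ∑ v : Fin (n + 1), q ^ (n - (v : ℕ)) = ∑ j ∈ Finset.range (n + 1), q ^ j := by
      rw [Fin.sum_univ_eq_sum_range (fun j => q ^ (n - j)), ← Finset.sum_range_reflect]
      exact Finset.sum_congr rfl fun j hj => by
        rw [Finset.mem_range] at hj
        congr 1
        omega
    rw [← Fintype.sum_bijective _ hbij _ _ fun _ => rfl, Fintype.sum_prod_type]
    simp only [invCount_insertLast, pow_add, ← Finset.mul_sum, ← Finset.sum_mul, ih, hrange,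
      invPoly, Finset.prod_range_succ]

lemma invPoly_pos {q : ℝ} (hq : 0 < q) (n : ℕ) : 0 < invPoly n q := by
  rw [← sum_pow_invCount]
  exact Finset.sum_pos (fun _ _ => pow_pos hq _) Finset.univ_nonempty

def InBlock (i m : ℕ) {n : ℕ} (x : Fin n) : Prop := i ≤ (x : ℕ) ∧ (x : ℕ) < i + m

lemma lt_iff_of_inBlock_of_not_inBlock {n i m : ℕ} {x y : Fin n} (hx : InBlock i m x)
    (hy : ¬ InBlock i m y) : x < y ↔ i + m ≤ y := by
  simp only [InBlock, Fin.lt_def] at hx hy ⊢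
  omega

lemma lt_iff_of_not_inBlock_of_inBlock {n i m : ℕ} {x y : Fin n} (hx : ¬ InBlock i m x)
    (hy : InBlock i m y) : x < y ↔ (x : ℕ) < i := by
  simp only [InBlock, Fin.lt_def] at hx hy ⊢
  omega

section Block

variable {n m i : ℕ} (h : i + m ≤ n)

def blockEquiv : Fin m ≃ {x : Fin n // InBlock i m x} where
  toFun k := ⟨⟨i + k, by omega⟩, by simp [InBlock]⟩
  invFun x := ⟨x.1 - i, by have := x.2; simp only [InBlock] at this; omega⟩
  left_inv k := Fin.ext (by simp)
  right_inv x := Subtype.ext (Fin.ext (by have := x.2; simp only [InBlock] at this; simp; omega))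

def blockPos (k : Fin m) : Fin n := blockEquiv h k

@[simp] lemma val_blockPos (k : Fin m) : (blockPos h k : ℕ) = i + k := rfl

lemma exists_blockPos_eq {x : Fin n} (hx : InBlock i m x) : ∃ k, blockPos h k = x :=
  ⟨(blockEquiv h).symm ⟨x, hx⟩, congrArg Subtype.val ((blockEquiv h).apply_symm_apply _)⟩

lemma blockPos_strictMono : StrictMono (blockPos h) := fun _ _ hkl => by
  rw [Fin.lt_def, val_blockPos, val_blockPos]
  exact Nat.add_lt_add_left hkl i

lemma occursConsec_iff_forall {σ : Equiv.Perm (Fin m)} {π : Equiv.Perm (Fin n)} :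
    OccursConsec σ π i ↔ ∀ k l, π (blockPos h k) < π (blockPos h l) ↔ σ k < σ l :=
  ⟨fun ⟨_, H⟩ => H, fun H => ⟨h, H⟩⟩

/-- The reduction `red(π|A)` for the block `A = {i, …, i + m - 1}` of 0-indexed positions. -/
def blockPattern (π : Equiv.Perm (Fin n)) : Equiv.Perm (Fin m) :=
  (Tuple.sort (π ∘ blockPos h))⁻¹

lemma lt_iff_blockPattern_lt (π : Equiv.Perm (Fin n)) (k l : Fin m) :
    π (blockPos h k) < π (blockPos h l) ↔ blockPattern h π k < blockPattern h π l :=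
  Tuple.lt_iff_sort_inv_lt (π.injective.comp (blockPos_strictMono h).injective) k l

lemma occursConsec_iff_blockPattern_eq {σ : Equiv.Perm (Fin m)} {π : Equiv.Perm (Fin n)} :
    OccursConsec σ π i ↔ blockPattern h π = σ := by
  simp only [occursConsec_iff_forall h, lt_iff_blockPattern_lt]
  exact ⟨Equiv.Perm.eq_of_forall_lt_iff, fun hσ _ _ => hσ ▸ Iff.rfl⟩

def blockPerm (τ : Equiv.Perm (Fin m)) : Equiv.Perm (Fin n) := τ.extendDomain (blockEquiv h)

lemma blockPerm_apply_blockPos (τ : Equiv.Perm (Fin m)) (k : Fin m) :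
    blockPerm h τ (blockPos h k) = blockPos h (τ k) :=
  τ.extendDomain_apply_image (blockEquiv h) k

lemma blockPerm_apply_of_not_inBlock (τ : Equiv.Perm (Fin m)) {x : Fin n}
    (hx : ¬ InBlock i m x) : blockPerm h τ x = x :=
  τ.extendDomain_apply_not_subtype (blockEquiv h) hx

lemma inBlock_blockPerm_apply (τ : Equiv.Perm (Fin m)) (x : Fin n) :
    InBlock i m (blockPerm h τ x) ↔ InBlock i m x := by
  by_cases hx : InBlock i m x
  · exact iff_of_true (τ.extendDomain_apply_subtype (blockEquiv h) hx ▸ Subtype.prop _) hx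
  · rw [blockPerm_apply_of_not_inBlock h τ hx]

lemma blockPerm_lt_blockPerm_iff (τ : Equiv.Perm (Fin m)) {x y : Fin n}
    (hxy : ¬ (InBlock i m x ∧ InBlock i m y)) :
    blockPerm h τ x < blockPerm h τ y ↔ x < y := by
  by_cases hx : InBlock i m x <;> by_cases hy : InBlock i m y
  · exact absurd ⟨hx, hy⟩ hxy
  · rw [blockPerm_apply_of_not_inBlock h τ hy, lt_iff_of_inBlock_of_not_inBlock hx hy,
      lt_iff_of_inBlock_of_not_inBlock ((inBlock_blockPerm_apply h τ x).mpr hx) hy]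
  · rw [blockPerm_apply_of_not_inBlock h τ hx, lt_iff_of_not_inBlock_of_inBlock hx hy,
      lt_iff_of_not_inBlock_of_inBlock hx ((inBlock_blockPerm_apply h τ y).mpr hy)]
  · rw [blockPerm_apply_of_not_inBlock h τ hx, blockPerm_apply_of_not_inBlock h τ hy]

lemma blockPattern_mul_blockPerm (π : Equiv.Perm (Fin n)) (τ : Equiv.Perm (Fin m)) :
    blockPattern h (π * blockPerm h τ) = blockPattern h π * τ := by
  refine (occursConsec_iff_blockPattern_eq h).mp ((occursConsec_iff_forall h).mpr fun k l => ?_)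
  simp only [Equiv.Perm.mul_apply, blockPerm_apply_blockPos, lt_iff_blockPattern_lt]

lemma blockPattern_mul_blockPerm_of_disjoint {m' i' : ℕ} (h' : i' + m' ≤ n)
    (hd : i + m ≤ i' ∨ i' + m' ≤ i) (π : Equiv.Perm (Fin n)) (τ : Equiv.Perm (Fin m')) :
    blockPattern h (π * blockPerm h' τ) = blockPattern h π := by
  have hfix : ∀ k, blockPerm h' τ (blockPos h k) = blockPos h k := fun k =>
    blockPerm_apply_of_not_inBlock h' τ (by simp only [InBlock, val_blockPos]; omega)
  simp only [blockPattern, Equiv.Perm.coe_mul, Function.comp_assoc]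
  congr 3
  exact funext hfix

lemma card_inversions_filter_inBlock (π : Equiv.Perm (Fin n)) :
    ((inversions π).filter fun p => InBlock i m p.1 ∧ InBlock i m p.2).card
      = invCount (blockPattern h π) := by
  rw [invCount_eq_card_inversions]
  symm
  refine Finset.card_bij (fun kl _ => (blockPos h kl.1, blockPos h kl.2)) ?_ ?_ ?_
  · rintro ⟨k, l⟩ hkl
    simp only [mem_inversions, Finset.mem_filter] at hkl ⊢
    exact ⟨⟨blockPos_strictMono h hkl.1, (lt_iff_blockPattern_lt h π l k).mpr hkl.2⟩,
      (blockEquiv h k).2, (blockEquiv h l).2⟩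
  · rintro ⟨k, l⟩ - ⟨k', l'⟩ - hkl
    simp only [Prod.mk.injEq, (blockPos_strictMono h).injective.eq_iff] at hkl
    rw [hkl.1, hkl.2]
  · rintro ⟨x, y⟩ hxy
    simp only [mem_inversions, Finset.mem_filter] at hxy
    obtain ⟨k, rfl⟩ := exists_blockPos_eq h hxy.2.1
    obtain ⟨l, rfl⟩ := exists_blockPos_eq h hxy.2.2
    refine ⟨(k, l), ?_, rfl⟩
    rw [mem_inversions]
    exact ⟨(blockPos_strictMono h).lt_iff_lt.mp hxy.1.1,
      (lt_iff_blockPattern_lt h π l k).mp hxy.1.2⟩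

lemma card_inversions_filter_not_inBlock_mul_blockPerm (π : Equiv.Perm (Fin n))
    (τ : Equiv.Perm (Fin m)) :
    ((inversions (π * blockPerm h τ)).filter
        fun p => ¬ (InBlock i m p.1 ∧ InBlock i m p.2)).card
      = ((inversions π).filter fun p => ¬ (InBlock i m p.1 ∧ InBlock i m p.2)).card := by
  refine Finset.card_equiv ((blockPerm h τ).prodCongr (blockPerm h τ)) fun p => ?_
  simp only [mem_inversions, Finset.mem_filter, Equiv.prodCongr_apply,
    Prod.map_fst, Prod.map_snd, Equiv.Perm.mul_apply, inBlock_blockPerm_apply]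
  exact ⟨fun H => ⟨⟨(blockPerm_lt_blockPerm_iff h τ H.2).mpr H.1.1, H.1.2⟩, H.2⟩,
    fun H => ⟨⟨(blockPerm_lt_blockPerm_iff h τ H.2).mp H.1.1, H.1.2⟩, H.2⟩⟩

lemma invCount_mul_blockPerm (π : Equiv.Perm (Fin n)) (τ : Equiv.Perm (Fin m)) :
    invCount (π * blockPerm h τ) + invCount (blockPattern h π)
      = invCount π + invCount (blockPattern h π * τ) := by
  have split := fun ρ : Equiv.Perm (Fin n) => Finset.card_filter_add_card_filter_not
    (s := inversions ρ) (fun p => InBlock i m p.1 ∧ InBlock i m p.2)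
  rw [invCount_eq_card_inversions (π * _), invCount_eq_card_inversions π, ← split, ← split,
    card_inversions_filter_inBlock h, card_inversions_filter_inBlock h,
    blockPattern_mul_blockPerm, card_inversions_filter_not_inBlock_mul_blockPerm]
  ring

lemma sum_filter_blockPattern_eq (q : ℝ) (P : Equiv.Perm (Fin n) → Prop) [DecidablePred P]
    (hP : ∀ π τ, P (π * blockPerm h τ) ↔ P π) (σ : Equiv.Perm (Fin m)) :
    ∑ π ∈ Finset.univ.filter (fun π => blockPattern h π = σ ∧ P π), q ^ invCount π
      = q ^ invCount σ *
        ∑ π ∈ Finset.univ.filter (fun π => blockPattern h π = 1 ∧ P π), q ^ invCount π := by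
  rw [Finset.mul_sum]
  refine (Finset.sum_equiv (Equiv.mulRight (blockPerm h σ)) (fun π => ?_) fun π hπ => ?_).symm
  · simp only [Finset.mem_filter, Finset.mem_univ, true_and, Equiv.coe_mulRight,
      blockPattern_mul_blockPerm, mul_eq_right, hP]
  · have hinv := invCount_mul_blockPerm h π σ
    rw [(Finset.mem_filter.mp hπ).2.1, one_mul, invCount_one, add_zero] at hinv
    rw [Equiv.coe_mulRight, hinv, pow_add, mul_comm]

end Block

section Mallows

variable {q : ℝ}

lemma mallowsProb_fiber (hq : 0 < q) {n : ℕ} {β : Type*} [Fintype β] [DecidableEq β]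
    (f : Equiv.Perm (Fin n) → β) (c : β → ℝ) (K : ℝ)
    (hfib : ∀ b, ∑ π ∈ Finset.univ.filter (fun π => f π = b), q ^ invCount π = c b * K)
    (b : β) : mallowsProb q {π | f π = b} = c b / ∑ b', c b' := by
  have htot : invPoly n q = (∑ b', c b') * K := by
    rw [← sum_pow_invCount, ← Finset.sum_fiberwise Finset.univ f, Finset.sum_mul]
    exact Finset.sum_congr rfl fun b' _ => hfib b'
  have hK : K ≠ 0 := by
    rintro rfl
    exact (invPoly_pos hq n).ne' (by rw [htot, mul_zero])
  simp only [mallowsProb, Set.mem_ofPred_eq, hfib, htot]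
  exact mul_div_mul_right _ _ hK

variable {n m i : ℕ}

lemma mallowsProb_blockPattern_eq (hq : 0 < q) (h : i + m ≤ n) (σ : Equiv.Perm (Fin m)) :
    mallowsProb q {π : Equiv.Perm (Fin n) | blockPattern h π = σ}
      = q ^ invCount σ / invPoly m q := by
  have hfib := sum_filter_blockPattern_eq h q (fun _ => True) fun _ _ => Iff.rfl
  simp only [and_true] at hfib
  rw [mallowsProb_fiber hq _ _ _ hfib, sum_pow_invCount]

lemma mallowsProb_blockPattern_eq_and_blockPattern_eq (hq : 0 < q) {m' i' : ℕ}
    (h : i + m ≤ n) (h' : i' + m' ≤ n) (hd : i + m ≤ i' ∨ i' + m' ≤ i)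
    (σ : Equiv.Perm (Fin m)) (σ' : Equiv.Perm (Fin m')) :
    mallowsProb q {π : Equiv.Perm (Fin n) | blockPattern h π = σ ∧ blockPattern h' π = σ'}
      = q ^ invCount σ * q ^ invCount σ' / (invPoly m q * invPoly m' q) := by
  have hfib : ∀ τ : Equiv.Perm (Fin m) × Equiv.Perm (Fin m'),
      ∑ π ∈ Finset.univ.filter (fun π => (blockPattern h π, blockPattern h' π) = τ),
        q ^ invCount π
      = q ^ invCount τ.1 * q ^ invCount τ.2 *
        ∑ π ∈ Finset.univ.filter (fun π => blockPattern h' π = 1 ∧ blockPattern h π = 1),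
          q ^ invCount π := by
    rintro ⟨τ, τ'⟩
    simp only [Prod.mk.injEq]
    rw [sum_filter_blockPattern_eq h q (fun π => blockPattern h' π = τ') fun π ρ => by
        rw [blockPattern_mul_blockPerm_of_disjoint h' h hd.symm]]
    simp only [and_comm (a := blockPattern h _ = 1)]
    rw [sum_filter_blockPattern_eq h' q (fun π => blockPattern h π = 1) fun π ρ => by
        rw [blockPattern_mul_blockPerm_of_disjoint h h' hd], mul_assoc]
  have hset : {π : Equiv.Perm (Fin n) | blockPattern h π = σ ∧ blockPattern h' π = σ'}
      = {π | (blockPattern h π, blockPattern h' π) = (σ, σ')} := by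
    simp only [Prod.mk.injEq]
  rw [hset, mallowsProb_fiber hq _ _ _ hfib]
  simp only [Fintype.sum_prod_type, ← Finset.sum_mul_sum, sum_pow_invCount]

end Mallows

/-- Lemma: Mallows(q) permutations are weakly dissociated: the reductions of two disjoint
blocks of consecutive positions are independent. -/
theorem stmt14 (q : ℝ) (hq : 0 < q) (n m m' i i' : ℕ)
    (h1 : i + m ≤ i') (h2 : i' + m' ≤ n)
    (σ : Equiv.Perm (Fin m)) (σ' : Equiv.Perm (Fin m')) :
    mallowsProb q {πn : Equiv.Perm (Fin n) | OccursConsec σ πn i ∧ OccursConsec σ' πn i'}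
      = mallowsProb q {πn : Equiv.Perm (Fin n) | OccursConsec σ πn i}
        * mallowsProb q {πn : Equiv.Perm (Fin n) | OccursConsec σ' πn i'} := by
  have h : i + m ≤ n := by omega
  simp only [occursConsec_iff_blockPattern_eq h, occursConsec_iff_blockPattern_eq h2]
  rw [mallowsProb_blockPattern_eq_and_blockPattern_eq hq h h2 (Or.inl h1),
    mallowsProb_blockPattern_eq hq h, mallowsProb_blockPattern_eq hq h2, mul_div_mul_comm]

end
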